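/- arXiv:2407.08494 — 3 statements merged into one kernel-verified Lean document; each statement's English description precedes it below -/
import Mathlib

section
/- (Combinatorial bound for overlapping index sets.) Let n, K be positive integers with n ≥ 2K, and let 𝒥_K be the collection of all K-element subsets of {1,…,n}. Then Σ_{J, J' ∈ 𝒥_K, J ∩ J' ≠ ∅} n^{−#(J∪J')} ≤ (2^K − 1)/K!. More precisely, using that #𝒥_K = binom(n, K) and that for each J ∈ 𝒥_K there are exactly binom(K, ℓ)·binom(n−K, K−ℓ) sets J' ∈ 𝒥_K with #(J ∩ J') = ℓ, one has Σ_{ℓ=1}^K Σ_{J,J'∈𝒥_K} 1{#(J∩J') = ℓ} n^{ℓ − 2K} ≤ (2^K − 1)/K!. -/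
open Finset

private lemma zpow_helper (x : ℝ) (c K m : ℕ) (hm : m + c = 2 * K) :
    (x ^ m)⁻¹ = x ^ ((c : ℤ) - 2 * K) := by
  have h : ((c : ℤ) - 2 * K) = -(m : ℤ) := by omega
  rw [h, zpow_neg, zpow_natCast]

private lemma count_lemma (n K ℓ : ℕ) :
    (((powersetCard K (range n)) ×ˢ (powersetCard K (range n))).filter
      (fun p => (p.1 ∩ p.2).card = ℓ)).card
      ≤ n.choose ℓ * (n.choose (K - ℓ)) ^ 2 := by
  have h := Finset.card_le_card_of_injOn
    (f := fun p : Finset ℕ × Finset ℕ => (p.1 ∩ p.2, p.1 \ p.2, p.2 \ p.1))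
    (s := ((powersetCard K (range n)) ×ˢ (powersetCard K (range n))).filter
      (fun p => (p.1 ∩ p.2).card = ℓ))
    (t := powersetCard ℓ (range n) ×ˢ
      (powersetCard (K - ℓ) (range n) ×ˢ powersetCard (K - ℓ) (range n)))
    ?_ ?_
  · calc _ ≤ _ := h
      _ = n.choose ℓ * (n.choose (K - ℓ)) ^ 2 := by
        simp only [Finset.card_product, Finset.card_powersetCard, Finset.card_range]; ring
  · rintro ⟨a, b⟩ hp
    simp only [Finset.mem_coe, Finset.mem_filter, Finset.mem_product, Finset.mem_powersetCard] at hp ⊢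
    obtain ⟨⟨⟨ha, hac⟩, hb, hbc⟩, hcard⟩ := hp
    refine ⟨⟨(Finset.inter_subset_left).trans ha, hcard⟩,
      ⟨(Finset.sdiff_subset).trans ha, ?_⟩, ⟨(Finset.sdiff_subset).trans hb, ?_⟩⟩
    · have := Finset.card_sdiff_add_card_inter a b
      omega
    · have := Finset.card_sdiff_add_card_inter b a
      rw [Finset.inter_comm] at this
      omega
  · rintro ⟨a, b⟩ _ ⟨c, d⟩ _ h
    simp only [Prod.mk.injEq] at h
    obtain ⟨h1, h2, h3⟩ := h
    have ha : a = c := by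
      have := Finset.sdiff_union_inter a b
      rw [h1, h2, Finset.sdiff_union_inter] at this
      exact this.symm
    have hb : b = d := by
      have h5 := Finset.sdiff_union_inter b a
      rw [Finset.inter_comm b a, h1, h3] at h5
      rw [← h5, Finset.inter_comm c d, Finset.sdiff_union_inter]
    simp [ha, hb]

/-- **Combinatorial bound for overlapping index sets.** For `n ≥ 2K`,
`Σ_{J,J'∈𝒥_K, J∩J'≠∅} n^{−#(J∪J')} ≤ (2^K − 1)/K!`, and in the refined form
`Σ_{ℓ=1}^K Σ_{J,J'} 1{#(J∩J') = ℓ} n^{ℓ−2K} ≤ (2^K − 1)/K!`. -/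
theorem overlapping_index_sets_sum_bound (n K : ℕ) (hK : 0 < K) (hn : 2 * K ≤ n) :
    (∑ J ∈ Finset.powersetCard K (Finset.range n),
        ∑ J' ∈ Finset.powersetCard K (Finset.range n),
          (if (J ∩ J').Nonempty then ((n : ℝ) ^ ((J ∪ J').card))⁻¹ else 0)
      ≤ ((2 : ℝ) ^ K - 1) / (Nat.factorial K)) ∧
    (∑ ℓ ∈ Finset.Icc 1 K,
        ∑ J ∈ Finset.powersetCard K (Finset.range n),
          ∑ J' ∈ Finset.powersetCard K (Finset.range n),
            (if (J ∩ J').card = ℓ then (n : ℝ) ^ ((ℓ : ℤ) - 2 * K) else 0)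
      ≤ ((2 : ℝ) ^ K - 1) / (Nat.factorial K)) := by
  have hn0 : 0 < n := by omega
  have hx : (0 : ℝ) < (n : ℝ) := by exact_mod_cast hn0
  -- per-ℓ bound
  have hterm : ∀ ℓ ∈ Finset.Icc 1 K,
      (∑ J ∈ Finset.powersetCard K (Finset.range n),
        ∑ J' ∈ Finset.powersetCard K (Finset.range n),
          (if (J ∩ J').card = ℓ then (n : ℝ) ^ ((ℓ : ℤ) - 2 * K) else 0))
      ≤ (K.choose ℓ : ℝ) / K.factorial := by
    intro ℓ hℓ
    rw [Finset.mem_Icc] at hℓ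
    obtain ⟨hℓ1, hℓK⟩ := hℓ
    set x : ℝ := (n : ℝ)
    have hsum : (∑ J ∈ Finset.powersetCard K (Finset.range n),
        ∑ J' ∈ Finset.powersetCard K (Finset.range n),
          (if (J ∩ J').card = ℓ then x ^ ((ℓ : ℤ) - 2 * K) else 0))
        = ((((powersetCard K (range n)) ×ˢ (powersetCard K (range n))).filter
            (fun p => (p.1 ∩ p.2).card = ℓ)).card : ℝ) * x ^ ((ℓ : ℤ) - 2 * K) := by
      rw [← Finset.sum_product']
      rw [← Finset.sum_filter, Finset.sum_const, nsmul_eq_mul]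
    rw [hsum]
    have hcard : ((((powersetCard K (range n)) ×ˢ (powersetCard K (range n))).filter
        (fun p => (p.1 ∩ p.2).card = ℓ)).card : ℝ)
        ≤ (n.choose ℓ : ℝ) * ((n.choose (K - ℓ)) : ℝ) ^ 2 := by
      have := count_lemma n K ℓ
      push_cast
      exact_mod_cast this
    have hzp : (0 : ℝ) < x ^ ((ℓ : ℤ) - 2 * K) := zpow_pos hx _
    calc _ ≤ ((n.choose ℓ : ℝ) * ((n.choose (K - ℓ)) : ℝ) ^ 2) * x ^ ((ℓ : ℤ) - 2 * K) :=
          mul_le_mul_of_nonneg_right hcard hzp.le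
      _ ≤ ((x ^ ℓ / ℓ.factorial) * ((x ^ (K - ℓ) / (K - ℓ).factorial) * x ^ (K - ℓ)))
            * x ^ ((ℓ : ℤ) - 2 * K) := by
          apply mul_le_mul_of_nonneg_right _ hzp.le
          have h2 : (n.choose ℓ : ℝ) ≤ x ^ ℓ / ℓ.factorial := Nat.choose_le_pow_div ℓ n
          have h3 : (n.choose (K - ℓ) : ℝ) ≤ x ^ (K - ℓ) / (K - ℓ).factorial :=
            Nat.choose_le_pow_div (K - ℓ) n
          have h4 : (n.choose (K - ℓ) : ℝ) ≤ x ^ (K - ℓ) := by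
            show (n.choose (K - ℓ) : ℝ) ≤ (n : ℝ) ^ (K - ℓ)
            exact_mod_cast Nat.choose_le_pow n (K - ℓ)
          have hc0 : (0 : ℝ) ≤ (n.choose (K - ℓ) : ℝ) := by positivity
          calc (n.choose ℓ : ℝ) * ((n.choose (K - ℓ)) : ℝ) ^ 2
              = (n.choose ℓ : ℝ) * ((n.choose (K - ℓ) : ℝ) * (n.choose (K - ℓ) : ℝ)) := by
                ring
            _ ≤ (x ^ ℓ / ℓ.factorial) * ((x ^ (K - ℓ) / (K - ℓ).factorial) * x ^ (K - ℓ)) := by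
                apply mul_le_mul h2 (mul_le_mul h3 h4 hc0 (by positivity)) (by positivity)
                  (by positivity)
      _ = (x ^ ℓ * x ^ (K - ℓ) * x ^ (K - ℓ) * x ^ ((ℓ : ℤ) - 2 * K))
            / (ℓ.factorial * (K - ℓ).factorial) := by ring
      _ = 1 / (ℓ.factorial * (K - ℓ).factorial) := by
          congr 1
          rw [← pow_add, ← pow_add]
          have hm : (ℓ + (K - ℓ) + (K - ℓ)) + ℓ = 2 * K := by omega
          rw [← zpow_helper x ℓ K _ hm]
          exact mul_inv_cancel₀ (by positivity)
      _ = (K.choose ℓ : ℝ) / K.factorial := by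
          have := Nat.choose_mul_factorial_mul_factorial hℓK
          have hK' : (K.choose ℓ : ℝ) * ℓ.factorial * (K - ℓ).factorial = K.factorial := by
            exact_mod_cast congrArg Nat.cast this
          rw [div_eq_div_iff (by positivity) (by positivity)]
          rw [← hK']; ring
  -- the second (refined) bound
  have key : (∑ ℓ ∈ Finset.Icc 1 K,
        ∑ J ∈ Finset.powersetCard K (Finset.range n),
          ∑ J' ∈ Finset.powersetCard K (Finset.range n),
            (if (J ∩ J').card = ℓ then (n : ℝ) ^ ((ℓ : ℤ) - 2 * K) else 0))
      ≤ ((2 : ℝ) ^ K - 1) / (Nat.factorial K) := by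
    calc _ ≤ ∑ ℓ ∈ Finset.Icc 1 K, (K.choose ℓ : ℝ) / K.factorial :=
          Finset.sum_le_sum hterm
      _ = (∑ ℓ ∈ Finset.Icc 1 K, (K.choose ℓ : ℝ)) / K.factorial := by
          rw [Finset.sum_div]
      _ = ((2 : ℝ) ^ K - 1) / (Nat.factorial K) := by
          congr 1
          have h1 : Finset.Icc 1 K = (Finset.range (K + 1)).erase 0 := by
            ext m; simp [Nat.lt_succ_iff]; omega
          rw [h1, Finset.sum_erase_eq_sub (by simp)]
          have h2 : (∑ ℓ ∈ Finset.range (K + 1), (K.choose ℓ : ℝ)) = 2 ^ K := by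
            exact_mod_cast congrArg Nat.cast (Nat.sum_range_choose K)
          rw [h2]; simp
  refine ⟨?_, key⟩
  -- rewrite the first sum into the second
  have heq : (∑ ℓ ∈ Finset.Icc 1 K,
        ∑ J ∈ Finset.powersetCard K (Finset.range n),
          ∑ J' ∈ Finset.powersetCard K (Finset.range n),
            (if (J ∩ J').card = ℓ then (n : ℝ) ^ ((ℓ : ℤ) - 2 * K) else 0))
      = (∑ J ∈ Finset.powersetCard K (Finset.range n),
        ∑ J' ∈ Finset.powersetCard K (Finset.range n),
          (if (J ∩ J').Nonempty then ((n : ℝ) ^ ((J ∪ J').card))⁻¹ else 0)) := by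
    rw [Finset.sum_comm]
    apply Finset.sum_congr rfl
    intro J hJ
    rw [Finset.sum_comm]
    apply Finset.sum_congr rfl
    intro J' hJ'
    rw [Finset.mem_powersetCard] at hJ hJ'
    have hcK : (J ∩ J').card ≤ K := by
      have hsub : J ∩ J' ⊆ J := Finset.inter_subset_left
      have := Finset.card_le_card hsub
      omega
    rw [Finset.sum_ite_eq (Finset.Icc 1 K) (J ∩ J').card
      (fun ℓ => ((n : ℝ) ^ ((ℓ : ℤ) - 2 * K)))]
    by_cases h : (J ∩ J').Nonempty
    · have hc1 : 1 ≤ (J ∩ J').card := Finset.card_pos.mpr h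
      rw [if_pos (by rw [Finset.mem_Icc]; omega), if_pos h]
      have hu : (J ∪ J').card + (J ∩ J').card = 2 * K := by
        have := Finset.card_union_add_card_inter J J'
        omega
      exact (zpow_helper (n : ℝ) _ K _ hu).symm
    · rw [if_neg h, if_neg]
      rw [Finset.mem_Icc]
      have : (J ∩ J').card = 0 := by
        rw [Finset.card_eq_zero, ← Finset.not_nonempty_iff_eq_empty]; exact h
      omega
  rw [← heq]
  exact key
end

section
/- (Deterministic determinant–eigenvalue inequality for polynomial designs.) Let d, L ≥ 1, 𝒦 = {κ ∈ ℕ₀^d : |κ| ≤ L}, K* = #𝒦, and let 𝒫₁ be the set of d-variate polynomials of degree ≤ L with P(0) = 1. For x = (x_1,…,x_{K*}) ∈ (ℝ^d)^{K*} with ‖x_j‖ ≤ 1 for every j, let Ξ_{d,L}(x) be the K* × K* matrix whose j-th row is (∏_{k=1}^d x_{j,k}^{κ_k})_{κ∈𝒦}, and ϑ_{d,L}(x) = det Ξ_{d,L}(x). Then ϑ_{d,L}(x)² ≤ ((L+1)·K*)^{K* − 1} · inf_{P ∈ 𝒫₁} Σ_{j=1}^{K*} P(x_j)². -/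
open MeasureTheory ProbabilityTheory Finset Filter Matrix

noncomputable section

abbrev Euc (d : ℕ) : Type := EuclideanSpace ℝ (Fin d)

/-- Multi-indices of total degree at most `L`. -/
def Kidx (d L : ℕ) : Type := {κ : Fin d → Fin (L + 1) // ∑ k, (κ k : ℕ) ≤ L}

instance (d L : ℕ) : Fintype (Kidx d L) := by unfold Kidx; infer_instance
instance (d L : ℕ) : DecidableEq (Kidx d L) := by unfold Kidx; infer_instance

/-- The zero multi-index. -/
def kZero (d L : ℕ) : Kidx d L := ⟨fun _ => 0, by simp⟩

/-- The vector of centered monomials `ξ(z, w)`. -/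
def xiVec (d L : ℕ) (z w : Euc d) : Kidx d L → ℝ :=
  fun κ => ∏ k, (w k - z k) ^ (κ.1 k : ℕ)

/-- The unit vector `e₀` whose component for `κ = 0` is `1`. -/
def eZero (d L : ℕ) : Kidx d L → ℝ := fun κ => if κ = kZero d L then 1 else 0

/-- The `K`-th order Voronoi cell `C(J)`. -/
def cell {d n : ℕ} {Ω : Type} (Sstar : Set (Euc d)) (Z : Fin n → Ω → Euc d)
    (J : Finset (Fin n)) (ω : Ω) : Set (Euc d) :=
  {z | z ∈ Sstar ∧ ∀ j ∈ J, ∀ k, k ∉ J → dist z (Z j ω) < dist z (Z k ω)}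

/-- The design matrix `M_J(z)`. -/
def MJmat (d L : ℕ) {n : ℕ} {Ω : Type} (Z : Fin n → Ω → Euc d)
    (J : Finset (Fin n)) (z : Euc d) (ω : Ω) : Matrix (Kidx d L) (Kidx d L) ℝ :=
  ∑ j ∈ J, vecMulVec (xiVec d L z (Z j ω)) (xiVec d L z (Z j ω))

/-- The value at `z` of the degree-`L` least squares polynomial fit `Ĝ(z)` on the cell of `J`. -/
def GhatJ (d L : ℕ) {n : ℕ} {Ω : Type} (Z : Fin n → Ω → Euc d) (Y : Fin n → Ω → ℝ)
    (J : Finset (Fin n)) (z : Euc d) (ω : Ω) : ℝ :=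
  ∑ j ∈ J, Y j ω * (eZero d L ⬝ᵥ ((MJmat d L Z J z ω)⁻¹ *ᵥ xiVec d L z (Z j ω)))

/-- The estimator `Ψ̂(L, K)`. -/
def PsiHat (d L K : ℕ) {n : ℕ} {Ω : Type} (Sstar : Set (Euc d))
    (Z : Fin n → Ω → Euc d) (Y : Fin n → Ω → ℝ) (ω : Ω) : ℝ :=
  ∑ J ∈ Finset.powersetCard K (Finset.univ : Finset (Fin n)),
    ∫ z in cell Sstar Z J ω, GhatJ d L Z Y J z ω

/-- The σ-field generated by `Z_1, …, Z_n`. -/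
def sigmaZ {d n : ℕ} {Ω : Type} (Z : Fin n → Ω → Euc d) : MeasurableSpace Ω :=
  ⨆ i, MeasurableSpace.comap (Z i) inferInstance

/-- The Hölder class `𝒢(l, β, C_H)` on the set `U`. -/
def holderClassG (d l : ℕ) (β CH : ℝ) (U : Set (Euc d)) (G : Euc d → ℝ) : Prop :=
  ContDiffOn ℝ l G U ∧
  ∀ z ∈ U, ∀ z' ∈ U,
    ‖iteratedFDerivWithin ℝ l G U z - iteratedFDerivWithin ℝ l G U z'‖ ≤ CH * ‖z - z'‖ ^ β

set_option maxHeartbeats 1000000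

lemma my_hadamard_rows_fin (n : ℕ) (M : Matrix (Fin n) (Fin n) ℝ) :
    M.det ^ 2 ≤ ∏ i, ∑ j, M i j ^ 2 := by
  classical
  have h : Module.finrank ℝ (EuclideanSpace ℝ (Fin n)) = Fintype.card (Fin n) :=
    finrank_euclideanSpace
  set f : Fin n → EuclideanSpace ℝ (Fin n) :=
    fun i => (WithLp.equiv 2 (Fin n → ℝ)).symm (M i) with hf
  haveI : WellFoundedLT (Fin n) := inferInstance
  set b := InnerProductSpace.gramSchmidtOrthonormalBasis h f with hb
  set e := EuclideanSpace.basisFun (Fin n) ℝ with he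
  have hdet2 : e.toBasis.det f = M.det := by
    rw [Module.Basis.det_apply]
    have hEq : e.toBasis.toMatrix f = Mᵀ := by
      ext i j
      simp [Module.Basis.toMatrix_apply, he, OrthonormalBasis.coe_toBasis_repr_apply,
        EuclideanSpace.basisFun_repr, hf, Matrix.transpose_apply]
    rw [hEq, Matrix.det_transpose]
  have hsmul : e.toBasis.det f = (e.toBasis.det b.toBasis) * (b.toBasis.det f) := by
    have h2 := (e.toBasis.det).eq_smul_basis_det b.toBasis
    have h3 := congrArg (fun (g : _ [⋀^Fin n]→ₗ[ℝ] ℝ) => g f) h2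
    simpa using h3
  have habs : |M.det| ≤ ∏ i, ‖f i‖ := by
    have h1 : b.toBasis.det f = ∏ i, inner ℝ (b i) (f i) :=
      InnerProductSpace.gramSchmidtOrthonormalBasis_det h f
    have h2 : |e.toBasis.det b.toBasis| = 1 := by
      rcases e.det_to_matrix_orthonormalBasis_real b with h' | h' <;> simp [h']
  -- note: inner in ℝ
    calc |M.det| = |e.toBasis.det f| := by rw [hdet2]
      _ = |e.toBasis.det b.toBasis| * |b.toBasis.det f| := by rw [hsmul, abs_mul]
      _ = |∏ i, (inner ℝ (b i) (f i) : ℝ)| := by rw [h2, one_mul, h1]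
      _ = ∏ i, |(inner ℝ (b i) (f i) : ℝ)| := Finset.abs_prod _ _
      _ ≤ ∏ i, ‖f i‖ := by
          refine Finset.prod_le_prod (fun i _ => abs_nonneg _) (fun i _ => ?_)
          have h4 := abs_real_inner_le_norm (b i) (f i)
          have h5 : ‖b i‖ = 1 := b.orthonormal.1 i
          simpa [h5] using h4
  calc M.det ^ 2 = |M.det| ^ 2 := (sq_abs _).symm
    _ ≤ (∏ i, ‖f i‖) ^ 2 := by
        refine pow_le_pow_left₀ (abs_nonneg _) habs 2
    _ = ∏ i, ‖f i‖ ^ 2 := by rw [Finset.prod_pow]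
    _ = ∏ i, ∑ j, M i j ^ 2 := by
        refine Finset.prod_congr rfl (fun i _ => ?_)
        rw [EuclideanSpace.norm_eq, Real.sq_sqrt (by positivity)]
        refine Finset.sum_congr rfl (fun j _ => ?_)
        simp [hf, sq_abs]

lemma my_hadamard_cols {ι : Type*} [Fintype ι] [DecidableEq ι] (M : Matrix ι ι ℝ) :
    M.det ^ 2 ≤ ∏ κ : ι, ∑ j : ι, M j κ ^ 2 := by
  classical
  set e := Fintype.equivFin ι with he
  have hdet : M.det = ((Matrix.reindex e e) Mᵀ).det := by simp
  calc M.det ^ 2 = ((Matrix.reindex e e) Mᵀ).det ^ 2 := by rw [← hdet]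
    _ ≤ ∏ i, ∑ j, ((Matrix.reindex e e) Mᵀ) i j ^ 2 := my_hadamard_rows_fin _ _
    _ = ∏ κ : ι, ∑ j : ι, M j κ ^ 2 := by
        refine (Fintype.prod_equiv e _ _ (fun κ => ?_)).symm
        refine Fintype.sum_equiv e _ _ (fun j => ?_)
        simp

lemma euc_coord_abs_le {d : ℕ} (w : Euc d) (k : Fin d) : |w k| ≤ ‖w‖ := by
  rw [EuclideanSpace.norm_eq, ← Real.sqrt_sq_eq_abs]
  apply Real.sqrt_le_sqrt
  have : |w k| ^ 2 ≤ ∑ i, ‖w i‖ ^ 2 := by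
    have := Finset.single_le_sum (f := fun i => ‖w i‖ ^ 2)
      (fun i _ => by positivity) (Finset.mem_univ k)
    simpa [Real.norm_eq_abs] using this
  simpa [sq_abs] using this

/-- **Deterministic determinant–eigenvalue inequality for polynomial designs.** For points
`x_1, …, x_{K*}` in the unit ball of `ℝ^d`, the squared determinant of the monomial design
matrix `Ξ_{d,L}(x)` is at most `((L+1)·K*)^{K*−1}` times
`inf_{P ∈ 𝒫₁} Σ_j P(x_j)²`, where `𝒫₁` are the degree-`≤ L` polynomials with `P(0) = 1`
(represented via their coefficient vectors `a` with `a₀ = 1`). -/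
theorem determinant_eigenvalue_inequality
    (d L : ℕ) (hd : 1 ≤ d) (hL : 1 ≤ L)
    (x : Kidx d L → Euc d) (hx : ∀ j, ‖x j‖ ≤ 1) :
    (Matrix.of fun j κ => xiVec d L 0 (x j) κ).det ^ 2 ≤
      (((L : ℝ) + 1) * (Fintype.card (Kidx d L))) ^ (Fintype.card (Kidx d L) - 1) *
        ⨅ a : {a : Kidx d L → ℝ // a (kZero d L) = 1},
          ∑ j : Kidx d L, (∑ κ, a.1 κ * xiVec d L 0 (x j) κ) ^ 2 := by
  classical
  set Ξ : Matrix (Kidx d L) (Kidx d L) ℝ := Matrix.of fun j κ => xiVec d L 0 (x j) κ with hΞ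
  set K := Fintype.card (Kidx d L) with hK
  have hKpos : 0 < K := Fintype.card_pos_iff.mpr ⟨kZero d L⟩
  set C : ℝ := (((L : ℝ) + 1) * K) ^ (K - 1) with hC
  have hCKpos : (0:ℝ) < ((L : ℝ) + 1) * K := by positivity
  have hCpos : 0 < C := by positivity
  -- entry bound
  have hent : ∀ j κ, Ξ j κ ^ 2 ≤ 1 := by
    intro j κ
    have habs : |Ξ j κ| ≤ 1 := by
      show |xiVec d L 0 (x j) κ| ≤ 1
      rw [xiVec, Finset.abs_prod]
      refine Finset.prod_le_one (fun k _ => abs_nonneg _) (fun k _ => ?_)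
      rw [abs_pow]
      refine pow_le_one₀ (abs_nonneg _) ?_
      have h1 : x j k - (0 : Euc d) k = x j k := by simp
      rw [h1]
      exact (euc_coord_abs_le (x j) k).trans (hx j)
    calc Ξ j κ ^ 2 = |Ξ j κ| ^ 2 := (sq_abs _).symm
      _ ≤ 1 ^ 2 := pow_le_pow_left₀ (abs_nonneg _) habs 2
      _ = 1 := one_pow 2
  -- key bound for each admissible coefficient vector
  have key : ∀ a : {a : Kidx d L → ℝ // a (kZero d L) = 1},
      Ξ.det ^ 2 ≤ C * ∑ j : Kidx d L, (∑ κ, a.1 κ * xiVec d L 0 (x j) κ) ^ 2 := by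
    intro a
    set Ξ' := Ξ.updateCol (kZero d L) (fun j => ∑ κ, a.1 κ • Ξ j κ) with hΞ'
    have hdet' : Ξ'.det = Ξ.det := by
      rw [hΞ', Matrix.det_updateCol_sum Ξ (kZero d L) a.1, a.2, one_smul]
    have hH := my_hadamard_cols Ξ'
    rw [hdet'] at hH
    have hsplit : (∏ κ : Kidx d L, ∑ j : Kidx d L, Ξ' j κ ^ 2) =
        (∑ j : Kidx d L, Ξ' j (kZero d L) ^ 2) *
          ∏ κ ∈ Finset.univ.erase (kZero d L), ∑ j : Kidx d L, Ξ' j κ ^ 2 :=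
      (Finset.mul_prod_erase Finset.univ _ (Finset.mem_univ _)).symm
    have hcol0 : ∀ j, Ξ' j (kZero d L) = ∑ κ, a.1 κ * xiVec d L 0 (x j) κ := by
      intro j
      rw [hΞ', Matrix.updateCol_self]
      simp [hΞ, smul_eq_mul]
    have hrest : (∏ κ ∈ Finset.univ.erase (kZero d L), ∑ j : Kidx d L, Ξ' j κ ^ 2) ≤ C := by
      have hub : ∀ κ ∈ Finset.univ.erase (kZero d L),
          (∑ j : Kidx d L, Ξ' j κ ^ 2) ≤ ((L : ℝ) + 1) * K := by
        intro κ hκ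
        have hne : κ ≠ kZero d L := (Finset.mem_erase.mp hκ).1
        have : (∑ j : Kidx d L, Ξ' j κ ^ 2) = ∑ j : Kidx d L, Ξ j κ ^ 2 := by
          refine Finset.sum_congr rfl (fun j _ => ?_)
          rw [hΞ', Matrix.updateCol_ne hne]
        rw [this]
        calc (∑ j : Kidx d L, Ξ j κ ^ 2) ≤ ∑ _j : Kidx d L, (1:ℝ) :=
              Finset.sum_le_sum (fun j _ => hent j κ)
          _ = (K : ℝ) := by simp [hK]
          _ ≤ ((L : ℝ) + 1) * K := by
              have hL1 : (1:ℝ) ≤ (L : ℝ) + 1 := by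
                have : (0:ℝ) ≤ (L : ℝ) := Nat.cast_nonneg L
                linarith
              exact le_mul_of_one_le_left (Nat.cast_nonneg K) hL1
      calc (∏ κ ∈ Finset.univ.erase (kZero d L), ∑ j : Kidx d L, Ξ' j κ ^ 2)
          ≤ ∏ _κ ∈ Finset.univ.erase (kZero d L), ((L : ℝ) + 1) * K :=
            Finset.prod_le_prod (fun κ _ => by positivity) hub
        _ = (((L : ℝ) + 1) * K) ^ (Finset.univ.erase (kZero d L)).card := by
            rw [Finset.prod_const]
        _ = C := by
            rw [hC, Finset.card_erase_of_mem (Finset.mem_univ _), Finset.card_univ, hK]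
    have h0nonneg : 0 ≤ ∑ j : Kidx d L, Ξ' j (kZero d L) ^ 2 := by positivity
    calc Ξ.det ^ 2 ≤ ∏ κ : Kidx d L, ∑ j : Kidx d L, Ξ' j κ ^ 2 := hH
      _ = (∑ j : Kidx d L, Ξ' j (kZero d L) ^ 2) *
            ∏ κ ∈ Finset.univ.erase (kZero d L), ∑ j : Kidx d L, Ξ' j κ ^ 2 := hsplit
      _ ≤ (∑ j : Kidx d L, Ξ' j (kZero d L) ^ 2) * C :=
            mul_le_mul_of_nonneg_left hrest h0nonneg
      _ = C * ∑ j : Kidx d L, (∑ κ, a.1 κ * xiVec d L 0 (x j) κ) ^ 2 := by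
            rw [mul_comm]
            congr 1
            exact Finset.sum_congr rfl (fun j _ => by rw [hcol0 j])
  haveI : Nonempty {a : Kidx d L → ℝ // a (kZero d L) = 1} :=
    ⟨⟨fun κ => if κ = kZero d L then 1 else 0, by simp⟩⟩
  have hinf : Ξ.det ^ 2 / C ≤
      ⨅ a : {a : Kidx d L → ℝ // a (kZero d L) = 1},
        ∑ j : Kidx d L, (∑ κ, a.1 κ * xiVec d L 0 (x j) κ) ^ 2 := by
    refine le_ciInf (fun a => ?_)
    rw [div_le_iff₀ hCpos, mul_comm]
    exact key a
  calc Ξ.det ^ 2 = C * (Ξ.det ^ 2 / C) := by field_simp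
    _ ≤ C * ⨅ a : {a : Kidx d L → ℝ // a (kZero d L) = 1},
          ∑ j : Kidx d L, (∑ κ, a.1 κ * xiVec d L 0 (x j) κ) ^ 2 :=
        mul_le_mul_of_nonneg_left hinf hCpos.le
end
end

section
/- (Moment bound for a binomial mixture power.) Let M, n be positive integers, let B be a Binomial(M, 1/2) random variable, and let γ₀, γ₁ > 0. Then E[(γ₀ · B/M + γ₁ · (1 − B/M))^n] ≤ ((γ₀ + γ₁)/2)^n · exp( (γ₀ − γ₁)² · n² / (2 (γ₀ + γ₁)² · M) ). -/
open MeasureTheory ENNReal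

private lemma binom_val (M : ℕ) (b : Fin (M+1)) :
    ((PMF.binomial (1/2) (by norm_num) M) b).toReal = (M.choose b : ℝ) * (1/2 : ℝ)^M := by
  rw [PMF.binomial_apply]
  have h2 : (1 - ((1/2 : NNReal) : ℝ≥0∞)) = ((1/2 : NNReal) : ℝ≥0∞) := by
    rw [ENNReal.coe_div (by norm_num), ENNReal.coe_one, ENNReal.coe_ofNat, one_div, ENNReal.one_sub_inv_two]
  rw [h2, Fin.val_last, ← pow_add]
  have hbM : (b : ℕ) ≤ M := Fin.is_le b
  have : (b : ℕ) + (M - b) = M := by omega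
  rw [this, ENNReal.toReal_mul, ENNReal.toReal_pow]
  norm_num [mul_comm]

/-- **Moment bound for a binomial mixture power.** If `B ~ Binomial(M, 1/2)` and
`γ₀, γ₁ > 0`, then
`E[(γ₀·B/M + γ₁·(1 − B/M))^n] ≤ ((γ₀+γ₁)/2)^n · exp((γ₀−γ₁)²·n²/(2(γ₀+γ₁)²·M))`. -/
theorem binomial_mixture_power_moment_bound
    (M n : ℕ) (hM : 0 < M) (hn : 0 < n) (γ₀ γ₁ : ℝ) (h₀ : 0 < γ₀) (h₁ : 0 < γ₁) :
    ∫ b, (γ₀ * ((b : ℕ) : ℝ) / M + γ₁ * (1 - ((b : ℕ) : ℝ) / M)) ^ n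
        ∂((PMF.binomial (1/2) (by norm_num) M).toMeasure)
      ≤ ((γ₀ + γ₁) / 2) ^ n *
        Real.exp ((γ₀ - γ₁) ^ 2 * n ^ 2 / (2 * (γ₀ + γ₁) ^ 2 * M)) := by
  have hγ : (0:ℝ) < γ₀ + γ₁ := by linarith
  have hMpos : (0:ℝ) < M := by exact_mod_cast hM
  set g : ℝ := (γ₀ + γ₁) / 2 with hg
  have hgpos : 0 < g := by positivity
  set c : ℝ := (γ₀ - γ₁) / (γ₀ + γ₁) with hc
  set t : ℝ := n * c / M with ht
  rw [PMF.integral_eq_sum]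
  have key : ∀ b : Fin (M+1),
      ((PMF.binomial (1/2) (by norm_num) M) b).toReal •
        (γ₀ * ((b:ℕ):ℝ) / M + γ₁ * (1 - ((b:ℕ):ℝ)/M)) ^ n
      ≤ (M.choose b : ℝ) * (1/2:ℝ)^M *
          (g^n * ((Real.exp t)^(b:ℕ) * (Real.exp (-t))^(M - (b:ℕ)))) := by
    intro b
    rw [binom_val, smul_eq_mul]
    have hbM : (b : ℕ) ≤ M := Fin.is_le b
    have hbMR : (((M - (b:ℕ)) : ℕ) : ℝ) = (M:ℝ) - (b:ℕ) := by push_cast [hbM]; ring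
    set x : ℝ := c * (2*((b:ℕ):ℝ) - M) / M with hx
    have hval : γ₀ * ((b:ℕ):ℝ) / M + γ₁ * (1 - ((b:ℕ):ℝ)/M) = g * (1 + x) := by
      rw [hx, hc, hg]; field_simp; ring
    have hxnn : 0 ≤ 1 + x := by
      have h3 : ((b:ℕ):ℝ) ≤ M := by exact_mod_cast hbM
      have h2 : 0 ≤ 1 - ((b:ℕ):ℝ)/M := by rw [sub_nonneg, div_le_one hMpos]; exact h3
      have h1 : 0 ≤ γ₀ * ((b:ℕ):ℝ) / M + γ₁ * (1 - ((b:ℕ):ℝ)/M) := by positivity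
      nlinarith [hval]
    have hpow : (γ₀ * ((b:ℕ):ℝ) / M + γ₁ * (1 - ((b:ℕ):ℝ)/M)) ^ n
        ≤ g^n * ((Real.exp t)^(b:ℕ) * (Real.exp (-t))^(M - (b:ℕ)))  := by
      rw [hval, mul_pow]
      have step1 : (1 + x)^n ≤ (Real.exp x)^n :=
        pow_le_pow_left₀ hxnn (by linarith [Real.add_one_le_exp x]) n
      have step2 : (Real.exp x)^n = (Real.exp t)^(b:ℕ) * (Real.exp (-t))^(M - (b:ℕ)) := by
        rw [← Real.exp_nat_mul, ← Real.exp_nat_mul, ← Real.exp_nat_mul, ← Real.exp_add]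
        congr 1
        rw [hx, ht, hbMR]
        field_simp
        ring
      rw [← step2]
      exact mul_le_mul_of_nonneg_left step1 (by positivity)
    exact mul_le_mul_of_nonneg_left hpow (by positivity)
  have sum_le := Finset.sum_le_sum (fun b (_ : b ∈ Finset.univ) => key b)
  refine le_trans sum_le ?_
  have hsum : ∑ b : Fin (M+1), (M.choose b : ℝ) * (1/2:ℝ)^M *
          (g^n * ((Real.exp t)^(b:ℕ) * (Real.exp (-t))^(M - (b:ℕ))))
      = g^n * (Real.cosh t)^M := by
    have e1 : ∑ b : Fin (M+1), (M.choose b : ℝ) * (1/2:ℝ)^M *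
          (g^n * ((Real.exp t)^(b:ℕ) * (Real.exp (-t))^(M - (b:ℕ))))
        = g^n * (1/2:ℝ)^M * ∑ b : Fin (M+1),
          (Real.exp t)^(b:ℕ) * (Real.exp (-t))^(M - (b:ℕ)) * (M.choose b : ℝ) := by
      rw [Finset.mul_sum]; exact Finset.sum_congr rfl fun b _ => by ring
    rw [e1, Fin.sum_univ_eq_sum_range (fun k =>
        (Real.exp t)^k * (Real.exp (-t))^(M - k) * (M.choose k : ℝ)), ← add_pow]
    rw [Real.cosh_eq, show (Real.exp t + Real.exp (-t))/2
        = (Real.exp t + Real.exp (-t)) * (1/2) by ring, mul_pow]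
    ring
  rw [hsum]
  have hcosh : (Real.cosh t)^M ≤ (Real.exp (t^2/2))^M :=
    pow_le_pow_left₀ (Real.cosh_pos t).le (Real.cosh_le_exp_half_sq t) M
  have hexp : (Real.exp (t^2/2))^M
      = Real.exp ((γ₀ - γ₁) ^ 2 * n ^ 2 / (2 * (γ₀ + γ₁) ^ 2 * M)) := by
    rw [← Real.exp_nat_mul, ht, hc]
    congr 1
    field_simp
  rw [← hexp]
  exact mul_le_mul_of_nonneg_left hcosh (by positivity)
end
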